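/- Let A be the graded ℝ-algebra generated by elements α_{ij} (1 ≤ i < j ≤ m) in a single degree d ≥ 1, with relations α_{ij}² = 0, α_{ij}α_{kl} = (−1)^d α_{kl}α_{ij} for {i,j} ≠ {k,l}, and α_{ij}α_{jk} − α_{ik}α_{jk} − α_{ij}α_{ik} = 0 for i < j < k (the three-term relation). Then the set of products α_{i_1 j_1}⋯α_{i_k j_k} with i_ℓ < j_ℓ for all ℓ and i_1 < i_2 < ⋯ < i_k forms a linear basis of A. -/

import Mathlib

noncomputable section

/-!
STATEMENT 4: Let `A` be the graded ℝ-algebra generated by `α_{ij}` (`1 ≤ i < j ≤ m`) in a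
single degree `d ≥ 1`, with relations `α_{ij}² = 0`,
`α_{ij}α_{kl} = (−1)^d α_{kl}α_{ij}` for `{i,j} ≠ {k,l}`, and the three-term relation
`α_{ij}α_{jk} − α_{ik}α_{jk} − α_{ij}α_{ik} = 0` for `i < j < k`.  Then the products
`α_{i_1 j_1}⋯α_{i_k j_k}` with `i_ℓ < j_ℓ` and `i_1 < i_2 < ⋯ < i_k` form a linear basis
of `A` (a Poincaré–Birkhoff–Witt basis).
-/

/-- Index set of the generators `α_{ij}` with `i < j`. -/
abbrev OrdIdx (m : ℕ) := {p : Fin m × Fin m // p.1 < p.2}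

/-- The quadratic relations. -/
inductive PBWRel (m d : ℕ) :
    FreeAlgebra ℝ (OrdIdx m) → FreeAlgebra ℝ (OrdIdx m) → Prop
  | sq (p : OrdIdx m) :
      PBWRel m d (FreeAlgebra.ι ℝ p * FreeAlgebra.ι ℝ p) 0
  | comm (p q : OrdIdx m) (h : p ≠ q) :
      PBWRel m d (FreeAlgebra.ι ℝ p * FreeAlgebra.ι ℝ q)
        (((-1 : ℝ) ^ d) • (FreeAlgebra.ι ℝ q * FreeAlgebra.ι ℝ p))
  | threeTerm (i j k : Fin m) (hij : i < j) (hjk : j < k) :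
      PBWRel m d
        (FreeAlgebra.ι ℝ (⟨(i, j), hij⟩ : OrdIdx m) * FreeAlgebra.ι ℝ (⟨(j, k), hjk⟩ : OrdIdx m)
          - FreeAlgebra.ι ℝ (⟨(i, k), lt_trans hij hjk⟩ : OrdIdx m)
              * FreeAlgebra.ι ℝ (⟨(j, k), hjk⟩ : OrdIdx m)
          - FreeAlgebra.ι ℝ (⟨(i, j), hij⟩ : OrdIdx m)
              * FreeAlgebra.ι ℝ (⟨(i, k), lt_trans hij hjk⟩ : OrdIdx m))
        0

/-- The quadratic algebra modeling `H^*(Conf(m, ℝ^{d+1}); ℝ)`. -/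
abbrev PBWAlg (m d : ℕ) := RingQuot (PBWRel m d)

/-- The generator `α_{ij}` of the presented algebra. -/
def pbwGen (m d : ℕ) (p : OrdIdx m) : PBWAlg m d :=
  RingQuot.mkAlgHom ℝ (PBWRel m d) (FreeAlgebra.ι ℝ p)

/-- The monomial `α_{i_1 j_1} ⋯ α_{i_k j_k}` indexed by a word. -/
def pbwWordProd (m d : ℕ) (l : List (OrdIdx m)) : PBWAlg m d :=
  (l.map (pbwGen m d)).prod

/-- A word `α_{i_1 j_1}⋯α_{i_k j_k}` is admissible when `i_1 < i_2 < ⋯ < i_k`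
(each letter already satisfies `i_ℓ < j_ℓ`). -/
def AdmissibleWord (m : ℕ) (l : List (OrdIdx m)) : Prop :=
  (l.map fun p => p.1.1).Pairwise (· < ·)

/-!
Spanning: for an admissible word `l`, the relations rewrite `α_p α_l` as a combination of
admissible words (`genMulWord`), so the span of the admissible monomials is a left ideal
containing `1`.

Independence: the same rewriting rules define operators `genOp p` on the vector space with basis
all words. A case analysis on the first letter of a word shows that these operators satisfy the
defining relations, so `A` acts on that space, and an admissible monomial applied to the empty
word gives back the word itself.
-/

open Finsupp

namespace PBWAlg

variable {m d : ℕ} {ε : ℝ}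

lemma smul_smul_of_mul_self_eq_one {R M : Type*} [Monoid R] [MulAction R M] {ε : R}
    (hε : ε * ε = 1) (x : M) : ε • ε • x = x := by
  rw [smul_smul, hε, one_smul]

abbrev WordSpace (m : ℕ) := List (OrdIdx m) →₀ ℝ

def consₗ (p : OrdIdx m) : WordSpace m →ₗ[ℝ] WordSpace m :=
  lmapDomain ℝ ℝ (List.cons p)

@[simp] lemma consₗ_single (p : OrdIdx m) (l : List (OrdIdx m)) (c : ℝ) :
    consₗ p (single l c) = single (p :: l) c := by
  simp [consₗ]

lemma consₗ_mem_supported {s t : Set (List (OrdIdx m))} {p : OrdIdx m} {f : WordSpace m}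
    (hf : f ∈ supported ℝ ℝ s) (hst : ∀ w ∈ s, p :: w ∈ t) :
    consₗ p f ∈ supported ℝ ℝ t :=
  supported_comap_lmapDomain ℝ ℝ _ t (supported_mono hst hf)

/-- `α_p · α_l` rewritten by the relations, with `ε` standing for `(-1)^d`. For a common first
index, the three-term relation is used as `α_{ia} α_{ib} = α_{ia} α_{ab} - α_{ib} α_{ab}`
(`a < b`), and `α_{ab}` is then moved further right. -/
def genMulWord (ε : ℝ) : OrdIdx m → List (OrdIdx m) → WordSpace m
  | p, [] => single [p] 1
  | p, q :: t =>
    if p.1.1 < q.1.1 then single (p :: q :: t) 1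
    else if q.1.1 < p.1.1 then ε • consₗ q (genMulWord ε p t)
    else if h : p.1.2 < q.1.2 then
      consₗ p (genMulWord ε ⟨(p.1.2, q.1.2), h⟩ t)
        - consₗ q (genMulWord ε ⟨(p.1.2, q.1.2), h⟩ t)
    else if h : q.1.2 < p.1.2 then
      ε • (consₗ q (genMulWord ε ⟨(q.1.2, p.1.2), h⟩ t)
        - consₗ p (genMulWord ε ⟨(q.1.2, p.1.2), h⟩ t))
    else 0

lemma genMulWord_nil (p : OrdIdx m) : genMulWord ε p [] = single [p] 1 := rfl

lemma genMulWord_cons_of_fst_lt {p q : OrdIdx m} (h : p.1.1 < q.1.1) (t : List (OrdIdx m)) :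
    genMulWord ε p (q :: t) = single (p :: q :: t) 1 := by
  rw [genMulWord, if_pos h]

lemma genMulWord_cons_of_fst_gt {p q : OrdIdx m} (h : q.1.1 < p.1.1) (t : List (OrdIdx m)) :
    genMulWord ε p (q :: t) = ε • consₗ q (genMulWord ε p t) := by
  rw [genMulWord, if_neg h.not_gt, if_pos h]

lemma genMulWord_cons_self (p : OrdIdx m) (t : List (OrdIdx m)) :
    genMulWord ε p (p :: t) = 0 := by
  simp [genMulWord]

lemma genMulWord_cons_of_snd_lt {i a b : Fin m} {hia : i < a} {hib : i < b} (hab : a < b)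
    (t : List (OrdIdx m)) :
    genMulWord ε ⟨(i, a), hia⟩ (⟨(i, b), hib⟩ :: t)
      = consₗ ⟨(i, a), hia⟩ (genMulWord ε ⟨(a, b), hab⟩ t)
        - consₗ ⟨(i, b), hib⟩ (genMulWord ε ⟨(a, b), hab⟩ t) := by
  rw [genMulWord, if_neg (lt_irrefl i), if_neg (lt_irrefl i), dif_pos hab]

lemma genMulWord_cons_of_snd_gt {i a b : Fin m} {hia : i < a} {hib : i < b} (hba : b < a)
    (t : List (OrdIdx m)) :
    genMulWord ε ⟨(i, a), hia⟩ (⟨(i, b), hib⟩ :: t)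
      = ε • (consₗ ⟨(i, b), hib⟩ (genMulWord ε ⟨(b, a), hba⟩ t)
        - consₗ ⟨(i, a), hia⟩ (genMulWord ε ⟨(b, a), hba⟩ t)) := by
  rw [genMulWord, if_neg (lt_irrefl i), if_neg (lt_irrefl i), dif_neg hba.not_gt, dif_pos hba]

def genOp (ε : ℝ) (p : OrdIdx m) : Module.End ℝ (WordSpace m) :=
  linearCombination ℝ (genMulWord ε p)

@[simp] lemma genOp_single (p : OrdIdx m) (l : List (OrdIdx m)) (c : ℝ) :
    genOp ε p (single l c) = c • genMulWord ε p l :=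
  linearCombination_single ℝ c l

lemma genOp_single_nil (p : OrdIdx m) : genOp ε p (single [] 1) = consₗ p (single [] 1) := by
  simp [genMulWord_nil]

lemma genOp_consₗ_of_fst_lt {i a k b : Fin m} {hia : i < a} {hkb : k < b} (h : i < k)
    (f : WordSpace m) :
    genOp ε ⟨(i, a), hia⟩ (consₗ ⟨(k, b), hkb⟩ f)
      = consₗ ⟨(i, a), hia⟩ (consₗ ⟨(k, b), hkb⟩ f) := by
  suffices genOp ε ⟨(i, a), hia⟩ ∘ₗ consₗ ⟨(k, b), hkb⟩
      = consₗ ⟨(i, a), hia⟩ ∘ₗ consₗ ⟨(k, b), hkb⟩ from LinearMap.congr_fun this f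
  ext l
  simp [genMulWord_cons_of_fst_lt (p := ⟨(i, a), hia⟩) (q := ⟨(k, b), hkb⟩) h]

lemma genOp_consₗ_of_fst_gt {i a k b : Fin m} {hia : i < a} {hkb : k < b} (h : k < i)
    (f : WordSpace m) :
    genOp ε ⟨(i, a), hia⟩ (consₗ ⟨(k, b), hkb⟩ f)
      = ε • consₗ ⟨(k, b), hkb⟩ (genOp ε ⟨(i, a), hia⟩ f) := by
  suffices genOp ε ⟨(i, a), hia⟩ ∘ₗ consₗ ⟨(k, b), hkb⟩
      = ε • consₗ ⟨(k, b), hkb⟩ ∘ₗ genOp ε ⟨(i, a), hia⟩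
    from LinearMap.congr_fun this f
  ext l
  simp [genMulWord_cons_of_fst_gt (p := ⟨(i, a), hia⟩) (q := ⟨(k, b), hkb⟩) h]

lemma genOp_consₗ_self (p : OrdIdx m) (f : WordSpace m) : genOp ε p (consₗ p f) = 0 := by
  suffices genOp ε p ∘ₗ consₗ p = 0 from LinearMap.congr_fun this f
  ext l
  simp [genMulWord_cons_self]

lemma genOp_consₗ_of_snd_lt {i a b : Fin m} {hia : i < a} {hib : i < b} (hab : a < b)
    (f : WordSpace m) :
    genOp ε ⟨(i, a), hia⟩ (consₗ ⟨(i, b), hib⟩ f)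
      = consₗ ⟨(i, a), hia⟩ (genOp ε ⟨(a, b), hab⟩ f)
        - consₗ ⟨(i, b), hib⟩ (genOp ε ⟨(a, b), hab⟩ f) := by
  suffices genOp ε ⟨(i, a), hia⟩ ∘ₗ consₗ ⟨(i, b), hib⟩
      = consₗ ⟨(i, a), hia⟩ ∘ₗ genOp ε ⟨(a, b), hab⟩
        - consₗ ⟨(i, b), hib⟩ ∘ₗ genOp ε ⟨(a, b), hab⟩
    from LinearMap.congr_fun this f
  ext l
  simp [genMulWord_cons_of_snd_lt hab]

lemma genOp_consₗ_of_snd_gt {i a b : Fin m} {hia : i < a} {hib : i < b} (hba : b < a)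
    (f : WordSpace m) :
    genOp ε ⟨(i, a), hia⟩ (consₗ ⟨(i, b), hib⟩ f)
      = ε • (consₗ ⟨(i, b), hib⟩ (genOp ε ⟨(b, a), hba⟩ f)
        - consₗ ⟨(i, a), hia⟩ (genOp ε ⟨(b, a), hba⟩ f)) := by
  suffices genOp ε ⟨(i, a), hia⟩ ∘ₗ consₗ ⟨(i, b), hib⟩
      = ε • (consₗ ⟨(i, b), hib⟩ ∘ₗ genOp ε ⟨(b, a), hba⟩
        - consₗ ⟨(i, a), hia⟩ ∘ₗ genOp ε ⟨(b, a), hba⟩)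
    from LinearMap.congr_fun this f
  ext l
  simp [genMulWord_cons_of_snd_gt hba]

structure SatisfiesRelations (ε : ℝ) (y : WordSpace m) : Prop where
  sq : ∀ p, genOp ε p (genOp ε p y) = 0
  comm : ∀ p q, genOp ε p (genOp ε q y) = ε • genOp ε q (genOp ε p y)
  threeTerm : ∀ (i j k : Fin m) (hij : i < j) (hjk : j < k),
    genOp ε ⟨(i, j), hij⟩ (genOp ε ⟨(j, k), hjk⟩ y)
      = genOp ε ⟨(i, k), hij.trans hjk⟩ (genOp ε ⟨(j, k), hjk⟩ y)
        + genOp ε ⟨(i, j), hij⟩ (genOp ε ⟨(i, k), hij.trans hjk⟩ y)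

lemma genOp_comm_of_lex (hε : ε * ε = 1) {y : WordSpace m}
    (hsq : ∀ p, genOp ε p (genOp ε p y) = 0)
    (hlex : ∀ (i a k b : Fin m) (hia : i < a) (hkb : k < b), i < k ∨ i = k ∧ a < b →
      genOp ε ⟨(i, a), hia⟩ (genOp ε ⟨(k, b), hkb⟩ y)
        = ε • genOp ε ⟨(k, b), hkb⟩ (genOp ε ⟨(i, a), hia⟩ y))
    (p q : OrdIdx m) : genOp ε p (genOp ε q y) = ε • genOp ε q (genOp ε p y) := by
  obtain ⟨⟨i, a⟩, hia⟩ := p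
  obtain ⟨⟨k, b⟩, hkb⟩ := q
  rcases lt_trichotomy i k with h | rfl | h
  · exact hlex i a k b hia hkb (.inl h)
  · rcases lt_trichotomy a b with h | rfl | h
    · exact hlex i a i b hia hkb (.inr ⟨rfl, h⟩)
    · rw [hsq, smul_zero]
    · rw [hlex i b i a hkb hia (.inr ⟨rfl, h⟩), smul_smul_of_mul_self_eq_one hε]
  · rw [hlex k b i a hkb hia (.inl h), smul_smul_of_mul_self_eq_one hε]

lemma satisfiesRelations_single_nil (hε : ε * ε = 1) :
    SatisfiesRelations ε (single [] 1 : WordSpace m) := by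
  have hsq : ∀ p : OrdIdx m, genOp ε p (genOp ε p (single [] 1)) = 0 := fun p => by
    rw [genOp_single_nil, genOp_consₗ_self]
  refine ⟨hsq, genOp_comm_of_lex hε hsq ?_, fun i j k hij hjk => ?_⟩
  · rintro i a k b hia hkb (h | ⟨rfl, h⟩) <;> rw [genOp_single_nil, genOp_single_nil]
    · rw [genOp_consₗ_of_fst_lt h, genOp_consₗ_of_fst_gt h, genOp_single_nil,
        smul_smul_of_mul_self_eq_one hε]
    · rw [genOp_consₗ_of_snd_lt h, genOp_consₗ_of_snd_gt h, smul_smul_of_mul_self_eq_one hε]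
  · rw [genOp_single_nil ⟨(j, k), hjk⟩, genOp_single_nil ⟨(i, k), hij.trans hjk⟩,
      genOp_consₗ_of_fst_lt hij, genOp_consₗ_of_fst_lt hij, genOp_consₗ_of_snd_lt hjk,
      genOp_single_nil ⟨(j, k), hjk⟩]
    abel

namespace SatisfiesRelations

variable {y : WordSpace m}

lemma sq_consₗ (hy : SatisfiesRelations ε y) (r p : OrdIdx m) :
    genOp ε p (genOp ε p (consₗ r y)) = 0 := by
  obtain ⟨⟨i0, c⟩, h0⟩ := r
  obtain ⟨⟨i, a⟩, hia⟩ := p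
  rcases lt_trichotomy i i0 with h | rfl | h
  · rw [genOp_consₗ_of_fst_lt h, genOp_consₗ_self]
  · rcases lt_trichotomy a c with h | rfl | h
    · rw [genOp_consₗ_of_snd_lt h, map_sub, genOp_consₗ_self, genOp_consₗ_of_snd_lt h, hy.sq]
      simp
    · rw [genOp_consₗ_self, map_zero]
    · rw [genOp_consₗ_of_snd_gt h, map_smul, map_sub, genOp_consₗ_self,
        genOp_consₗ_of_snd_gt h, hy.sq]
      simp
  · rw [genOp_consₗ_of_fst_gt h, map_smul, genOp_consₗ_of_fst_gt h, hy.sq]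
    simp

lemma comm_consₗ_of_fst_eq_of_lt (hε : ε * ε = 1) (hy : SatisfiesRelations ε y)
    {i a k b c : Fin m} (hia : i < a) (hkb : k < b) (hic : i < c) (hik : i < k) :
    genOp ε ⟨(i, a), hia⟩ (genOp ε ⟨(k, b), hkb⟩ (consₗ ⟨(i, c), hic⟩ y))
      = ε • genOp ε ⟨(k, b), hkb⟩
          (genOp ε ⟨(i, a), hia⟩ (consₗ ⟨(i, c), hic⟩ y)) := by
  rcases lt_trichotomy a c with h | rfl | h
  · rw [genOp_consₗ_of_fst_gt hik, map_smul, genOp_consₗ_of_snd_lt h,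
      genOp_consₗ_of_snd_lt h, map_sub, genOp_consₗ_of_fst_gt hik, genOp_consₗ_of_fst_gt hik,
      hy.comm ⟨(a, c), h⟩]
    simp only [map_smul, smul_sub, smul_smul_of_mul_self_eq_one hε]
  · rw [genOp_consₗ_of_fst_gt hik, map_smul, genOp_consₗ_self, genOp_consₗ_self]
    simp
  · rw [genOp_consₗ_of_fst_gt hik, map_smul, genOp_consₗ_of_snd_gt h,
      genOp_consₗ_of_snd_gt h, map_smul, map_sub, genOp_consₗ_of_fst_gt hik,
      genOp_consₗ_of_fst_gt hik, hy.comm ⟨(c, a), h⟩]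
    simp only [map_smul, smul_sub, smul_smul_of_mul_self_eq_one hε]

lemma comm_consₗ_of_fst_eq_of_eq (hε : ε * ε = 1) (hy : SatisfiesRelations ε y)
    {i a b c : Fin m} (hia : i < a) (hib : i < b) (hic : i < c) (hab : a < b) :
    genOp ε ⟨(i, a), hia⟩ (genOp ε ⟨(i, b), hib⟩ (consₗ ⟨(i, c), hic⟩ y))
      = ε • genOp ε ⟨(i, b), hib⟩
          (genOp ε ⟨(i, a), hia⟩ (consₗ ⟨(i, c), hic⟩ y)) := by
  rcases lt_trichotomy c a with hca | rfl | hac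
  · have hcb : c < b := hca.trans hab
    rw [genOp_consₗ_of_snd_gt hcb, map_smul, map_sub, genOp_consₗ_of_snd_gt hca,
      genOp_consₗ_of_snd_lt hab, genOp_consₗ_of_snd_gt hca, map_smul, map_sub,
      genOp_consₗ_of_snd_gt hcb, genOp_consₗ_of_snd_gt hab,
      hy.comm ⟨(a, b), hab⟩ ⟨(c, b), hcb⟩, hy.comm ⟨(a, b), hab⟩ ⟨(c, a), hca⟩,
      hy.threeTerm c a b hca hab, hy.comm ⟨(c, a), hca⟩ ⟨(c, b), hcb⟩]
    simp only [map_smul, map_add, smul_sub, smul_add, smul_smul_of_mul_self_eq_one hε]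
    abel
  · rw [genOp_consₗ_of_snd_gt hab, map_smul, map_sub, genOp_consₗ_self, genOp_consₗ_self,
      genOp_consₗ_of_snd_lt hab, hy.sq]
    simp
  rcases lt_trichotomy c b with hcb | rfl | hbc
  · rw [genOp_consₗ_of_snd_gt hcb, map_smul, map_sub, genOp_consₗ_of_snd_lt hac,
      genOp_consₗ_of_snd_lt hab, genOp_consₗ_of_snd_lt hac, map_sub,
      genOp_consₗ_of_snd_gt hab, genOp_consₗ_of_snd_gt hcb,
      hy.comm ⟨(c, b), hcb⟩ ⟨(a, c), hac⟩, hy.comm ⟨(a, b), hab⟩ ⟨(a, c), hac⟩,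
      hy.threeTerm a c b hac hcb, hy.comm ⟨(a, b), hab⟩ ⟨(c, b), hcb⟩]
    simp only [map_smul, map_add, smul_sub, smul_add, smul_smul_of_mul_self_eq_one hε]
    abel
  · rw [genOp_consₗ_self, map_zero, genOp_consₗ_of_snd_lt hab, map_sub,
      genOp_consₗ_of_snd_gt hab, genOp_consₗ_self, hy.sq]
    simp
  · have hac : a < c := hab.trans hbc
    rw [genOp_consₗ_of_snd_lt hbc, map_sub, genOp_consₗ_of_snd_lt hab,
      genOp_consₗ_of_snd_lt hac, genOp_consₗ_of_snd_lt hac, map_sub,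
      genOp_consₗ_of_snd_gt hab, genOp_consₗ_of_snd_lt hbc, hy.threeTerm a b c hab hbc,
      hy.comm ⟨(b, c), hbc⟩ ⟨(a, c), hac⟩]
    simp only [map_smul, map_add, smul_sub, smul_smul_of_mul_self_eq_one hε]
    abel

lemma comm_consₗ_of_lt_fst (hε : ε * ε = 1) {i a k b i0 c : Fin m} (hia : i < a) (hkb : k < b)
    (h0 : i0 < c) (hi : i < i0) (hpq : i < k ∨ i = k ∧ a < b) :
    genOp ε ⟨(i, a), hia⟩ (genOp ε ⟨(k, b), hkb⟩ (consₗ ⟨(i0, c), h0⟩ y))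
      = ε • genOp ε ⟨(k, b), hkb⟩
          (genOp ε ⟨(i, a), hia⟩ (consₗ ⟨(i0, c), h0⟩ y)) := by
  rcases hpq with hik | ⟨rfl, hab⟩
  · rcases lt_trichotomy k i0 with hk | rfl | hk
    · rw [genOp_consₗ_of_fst_lt hk, genOp_consₗ_of_fst_lt hik, genOp_consₗ_of_fst_lt hi,
        genOp_consₗ_of_fst_gt hik, genOp_consₗ_of_fst_lt hk, smul_smul_of_mul_self_eq_one hε]
    · rcases lt_trichotomy b c with hbc | rfl | hcb
      · rw [genOp_consₗ_of_snd_lt hbc, map_sub, genOp_consₗ_of_fst_lt hik,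
          genOp_consₗ_of_fst_lt hik, genOp_consₗ_of_fst_lt hik, genOp_consₗ_of_fst_gt hik,
          genOp_consₗ_of_snd_lt hbc]
        simp only [map_sub, smul_sub, smul_smul_of_mul_self_eq_one hε]
      · rw [genOp_consₗ_self, map_zero, genOp_consₗ_of_fst_lt hik, genOp_consₗ_of_fst_gt hik,
          genOp_consₗ_self]
        simp
      · rw [genOp_consₗ_of_snd_gt hcb, map_smul, map_sub, genOp_consₗ_of_fst_lt hik,
          genOp_consₗ_of_fst_lt hik, genOp_consₗ_of_fst_lt hik, genOp_consₗ_of_fst_gt hik,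
          genOp_consₗ_of_snd_gt hcb]
        simp only [map_smul, map_sub, smul_sub, smul_smul_of_mul_self_eq_one hε]
    · rw [genOp_consₗ_of_fst_gt hk, map_smul, genOp_consₗ_of_fst_lt hi,
        genOp_consₗ_of_fst_lt hi, genOp_consₗ_of_fst_gt hik, genOp_consₗ_of_fst_gt hk]
      simp only [map_smul, smul_smul_of_mul_self_eq_one hε]
  · rw [genOp_consₗ_of_fst_lt hi, genOp_consₗ_of_fst_lt hi,
      genOp_consₗ_of_snd_lt hab, genOp_consₗ_of_snd_gt hab, smul_smul_of_mul_self_eq_one hε]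

lemma comm_consₗ (hε : ε * ε = 1) (hy : SatisfiesRelations ε y) (r p q : OrdIdx m) :
    genOp ε p (genOp ε q (consₗ r y)) = ε • genOp ε q (genOp ε p (consₗ r y)) := by
  refine genOp_comm_of_lex hε (hy.sq_consₗ r) ?_ p q
  obtain ⟨⟨i0, c⟩, h0⟩ := r
  intro i a k b hia hkb hpq
  have hik : i ≤ k := hpq.elim le_of_lt fun h => h.1.le
  rcases lt_trichotomy i0 i with hi | rfl | hi
  · have hk : i0 < k := hi.trans_le hik
    rw [genOp_consₗ_of_fst_gt hk, map_smul, genOp_consₗ_of_fst_gt hi,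
      genOp_consₗ_of_fst_gt hi, map_smul, genOp_consₗ_of_fst_gt hk,
      hy.comm ⟨(i, a), hia⟩ ⟨(k, b), hkb⟩]
    simp only [map_smul, smul_smul_of_mul_self_eq_one hε]
  · rcases hpq with hik | ⟨rfl, hab⟩
    · exact hy.comm_consₗ_of_fst_eq_of_lt hε hia hkb h0 hik
    · exact hy.comm_consₗ_of_fst_eq_of_eq hε hia hkb h0 hab
  · exact comm_consₗ_of_lt_fst hε hia hkb h0 hi hpq

lemma threeTerm_consₗ_of_fst_eq (hε : ε * ε = 1) (hy : SatisfiesRelations ε y)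
    {i j k c : Fin m} (hij : i < j) (hjk : j < k) (hic : i < c) :
    genOp ε ⟨(i, j), hij⟩ (genOp ε ⟨(j, k), hjk⟩ (consₗ ⟨(i, c), hic⟩ y))
      = genOp ε ⟨(i, k), hij.trans hjk⟩
          (genOp ε ⟨(j, k), hjk⟩ (consₗ ⟨(i, c), hic⟩ y))
        + genOp ε ⟨(i, j), hij⟩
            (genOp ε ⟨(i, k), hij.trans hjk⟩ (consₗ ⟨(i, c), hic⟩ y)) := by
  rcases lt_trichotomy c j with hcj | rfl | hjc
  · have hck : c < k := hcj.trans hjk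
    simp only [genOp_consₗ_of_fst_gt hij, map_smul, genOp_consₗ_of_snd_gt hcj,
      genOp_consₗ_of_snd_gt hck, genOp_consₗ_of_snd_lt hjk, map_sub, smul_sub,
      smul_smul_of_mul_self_eq_one hε]
    rw [hy.threeTerm c j k hcj hjk, hy.comm ⟨(j, k), hjk⟩ ⟨(c, k), hck⟩]
    simp only [map_add, map_smul, smul_smul_of_mul_self_eq_one hε]
    abel
  · simp [genOp_consₗ_of_fst_gt hij, genOp_consₗ_self, genOp_consₗ_of_snd_gt hjk,
      genOp_consₗ_of_snd_lt hjk, hy.sq]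
  rcases lt_trichotomy c k with hck | rfl | hkc
  · simp only [genOp_consₗ_of_fst_gt hij, map_smul, genOp_consₗ_of_snd_lt hjc,
      genOp_consₗ_of_snd_gt hck, genOp_consₗ_of_snd_lt hjk, map_sub, smul_sub]
    rw [hy.comm ⟨(c, k), hck⟩ ⟨(j, k), hjk⟩, hy.threeTerm j c k hjc hck]
    simp only [map_add, map_smul, smul_add, smul_smul_of_mul_self_eq_one hε]
    abel
  · simp [genOp_consₗ_of_fst_gt hij, genOp_consₗ_of_snd_lt hjk, genOp_consₗ_self, hy.sq]
  · simp only [genOp_consₗ_of_fst_gt hij, map_smul, genOp_consₗ_of_snd_lt hjc,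
      genOp_consₗ_of_snd_lt hkc, genOp_consₗ_of_snd_lt hjk, map_sub, smul_sub]
    rw [hy.comm ⟨(j, c), hjc⟩ ⟨(j, k), hjk⟩, hy.comm ⟨(k, c), hkc⟩ ⟨(j, k), hjk⟩,
      hy.threeTerm j k c hjk hkc]
    simp only [map_add, map_smul, smul_add, smul_smul_of_mul_self_eq_one hε]
    abel

lemma threeTerm_consₗ_of_lt_fst {i j k i0 c : Fin m} (hij : i < j)
    (hjk : j < k) (h0 : i0 < c) (hi : i < i0) :
    genOp ε ⟨(i, j), hij⟩ (genOp ε ⟨(j, k), hjk⟩ (consₗ ⟨(i0, c), h0⟩ y))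
      = genOp ε ⟨(i, k), hij.trans hjk⟩
          (genOp ε ⟨(j, k), hjk⟩ (consₗ ⟨(i0, c), h0⟩ y))
        + genOp ε ⟨(i, j), hij⟩
            (genOp ε ⟨(i, k), hij.trans hjk⟩ (consₗ ⟨(i0, c), h0⟩ y)) := by
  rcases lt_trichotomy i0 j with hj | rfl | hj
  · simp only [genOp_consₗ_of_fst_gt hj, map_smul, genOp_consₗ_of_fst_lt hi,
      genOp_consₗ_of_snd_lt hjk]
    abel
  · rcases lt_trichotomy c k with hck | rfl | hkc
    · simp only [genOp_consₗ_of_snd_gt hck, map_smul, map_sub, genOp_consₗ_of_fst_lt hi,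
        genOp_consₗ_of_snd_lt hjk, smul_sub]
      abel
    · simp [genOp_consₗ_self, genOp_consₗ_of_fst_lt hi, genOp_consₗ_of_snd_lt hjk]
    · simp only [genOp_consₗ_of_snd_lt hkc, map_sub, genOp_consₗ_of_fst_lt hi,
        genOp_consₗ_of_snd_lt hjk]
      abel
  · simp only [genOp_consₗ_of_fst_lt hj, genOp_consₗ_of_fst_lt hij, genOp_consₗ_of_fst_lt hi,
      genOp_consₗ_of_snd_lt hjk]
    abel

lemma consₗ (hε : ε * ε = 1) (hy : SatisfiesRelations ε y) (r : OrdIdx m) :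
    SatisfiesRelations ε (consₗ r y) := by
  refine ⟨hy.sq_consₗ r, hy.comm_consₗ hε r, fun i j k hij hjk => ?_⟩
  obtain ⟨⟨i0, c⟩, h0⟩ := r
  rcases lt_trichotomy i0 i with hi | rfl | hi
  · simp only [genOp_consₗ_of_fst_gt (hi.trans hij), genOp_consₗ_of_fst_gt hi, map_smul,
      smul_smul_of_mul_self_eq_one hε, hy.threeTerm i j k hij hjk, map_add]
  · exact hy.threeTerm_consₗ_of_fst_eq hε hij hjk h0
  · exact threeTerm_consₗ_of_lt_fst hij hjk h0 hi

end SatisfiesRelations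

lemma satisfiesRelations_single (hε : ε * ε = 1) (t : List (OrdIdx m)) :
    SatisfiesRelations ε (single t 1) := by
  induction t with
  | nil => exact satisfiesRelations_single_nil hε
  | cons r t ih => simpa using ih.consₗ hε r

lemma admissibleWord_cons_iff {p : OrdIdx m} {l : List (OrdIdx m)} :
    AdmissibleWord m (p :: l) ↔ (∀ u ∈ l, p.1.1 < u.1.1) ∧ AdmissibleWord m l := by
  simp [AdmissibleWord, List.pairwise_cons]

lemma genMulWord_of_admissibleWord {p : OrdIdx m} {l : List (OrdIdx m)}
    (h : AdmissibleWord m (p :: l)) : genMulWord ε p l = single (p :: l) 1 := by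
  cases l with
  | nil => rfl
  | cons q t => exact genMulWord_cons_of_fst_lt ((admissibleWord_cons_iff.mp h).1 q (by simp)) t

lemma genMulWord_mem_supported_fst_gt {e : Fin m} {l : List (OrdIdx m)}
    (hl : ∀ u ∈ l, e < u.1.1) (p : OrdIdx m) (hp : e < p.1.1) :
    genMulWord ε p l ∈ supported ℝ ℝ {w | ∀ u ∈ w, e < u.1.1} := by
  set S : Set (List (OrdIdx m)) := {w | ∀ u ∈ w, e < u.1.1}
  have hcons (x : OrdIdx m) (hx : e < x.1.1) : ∀ w ∈ S, x :: w ∈ S := fun w hw u hu => by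
    rcases List.mem_cons.mp hu with rfl | hu
    exacts [hx, hw u hu]
  induction l generalizing p with
  | nil => exact single_mem_supported ℝ _ (hcons p hp [] (by simp [S]))
  | cons q t ih =>
    have hq : e < q.1.1 := hl q (by simp)
    have ht : ∀ u ∈ t, e < u.1.1 := fun u hu => hl u (.tail _ hu)
    obtain ⟨⟨i, a⟩, hia⟩ := p
    obtain ⟨⟨k, b⟩, hkb⟩ := q
    rcases lt_trichotomy i k with h | rfl | h
    · rw [genMulWord_cons_of_fst_lt h]
      exact single_mem_supported ℝ _ (hcons _ hp _ hl)
    · rcases lt_trichotomy a b with hab | rfl | hba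
      · have hG := ih ht ⟨(a, b), hab⟩ (hp.trans hia)
        rw [genMulWord_cons_of_snd_lt hab]
        exact sub_mem (consₗ_mem_supported hG (hcons _ hp))
          (consₗ_mem_supported hG (hcons _ hq))
      · rw [genMulWord_cons_self]
        exact zero_mem _
      · have hG := ih ht ⟨(b, a), hba⟩ (hq.trans hkb)
        rw [genMulWord_cons_of_snd_gt hba]
        exact Submodule.smul_mem _ _
          (sub_mem (consₗ_mem_supported hG (hcons _ hq)) (consₗ_mem_supported hG (hcons _ hp)))
    · rw [genMulWord_cons_of_fst_gt h]
      exact Submodule.smul_mem _ _ (consₗ_mem_supported (ih ht _ hp) (hcons _ hq))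

lemma consₗ_mem_supported_admissibleWord {x : OrdIdx m} {f : WordSpace m}
    (hfst : f ∈ supported ℝ ℝ {w | ∀ u ∈ w, x.1.1 < u.1.1})
    (hadm : f ∈ supported ℝ ℝ {w | AdmissibleWord m w}) :
    consₗ x f ∈ supported ℝ ℝ {w | AdmissibleWord m w} := by
  refine consₗ_mem_supported (s := {w | ∀ u ∈ w, x.1.1 < u.1.1} ∩ {w | AdmissibleWord m w})
    (by rw [supported_inter]; exact ⟨hfst, hadm⟩) fun w hw => ?_
  exact admissibleWord_cons_iff.mpr hw

lemma genMulWord_mem_supported_admissibleWord {l : List (OrdIdx m)} (hl : AdmissibleWord m l)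
    (p : OrdIdx m) : genMulWord ε p l ∈ supported ℝ ℝ {w | AdmissibleWord m w} := by
  induction l generalizing p with
  | nil => exact single_mem_supported ℝ _ (by simp [AdmissibleWord])
  | cons q t ih =>
    obtain ⟨hqt, ht⟩ := admissibleWord_cons_iff.mp hl
    obtain ⟨⟨i, a⟩, hia⟩ := p
    obtain ⟨⟨k, b⟩, hkb⟩ := q
    rcases lt_trichotomy i k with h | rfl | h
    · rw [genMulWord_cons_of_fst_lt h]
      refine single_mem_supported ℝ _ (admissibleWord_cons_iff.mpr ⟨fun u hu => ?_, hl⟩)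
      rcases List.mem_cons.mp hu with rfl | hu
      exacts [h, h.trans (hqt u hu)]
    · rcases lt_trichotomy a b with hab | rfl | hba
      · have hG := genMulWord_mem_supported_fst_gt (ε := ε) hqt ⟨(a, b), hab⟩ hia
        rw [genMulWord_cons_of_snd_lt hab]
        exact sub_mem (consₗ_mem_supported_admissibleWord hG (ih ht _))
          (consₗ_mem_supported_admissibleWord hG (ih ht _))
      · rw [genMulWord_cons_self]
        exact zero_mem _
      · have hG := genMulWord_mem_supported_fst_gt (ε := ε) hqt ⟨(b, a), hba⟩ hkb
        rw [genMulWord_cons_of_snd_gt hba]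
        exact Submodule.smul_mem _ _ (sub_mem (consₗ_mem_supported_admissibleWord hG (ih ht _))
          (consₗ_mem_supported_admissibleWord hG (ih ht _)))
    · have hG := genMulWord_mem_supported_fst_gt (ε := ε) hqt ⟨(i, a), hia⟩ h
      rw [genMulWord_cons_of_fst_gt h]
      exact Submodule.smul_mem _ _ (consₗ_mem_supported_admissibleWord hG (ih ht _))

lemma pbwWordProd_nil : pbwWordProd m d [] = 1 := rfl

lemma pbwWordProd_cons (p : OrdIdx m) (l : List (OrdIdx m)) :
    pbwWordProd m d (p :: l) = pbwGen m d p * pbwWordProd m d l := by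
  simp [pbwWordProd]

lemma pbwGen_mul_self (p : OrdIdx m) : pbwGen m d p * pbwGen m d p = 0 := by
  simpa [pbwGen] using RingQuot.mkAlgHom_rel ℝ (PBWRel.sq (m := m) (d := d) p)

lemma pbwGen_mul_comm {p q : OrdIdx m} (h : p ≠ q) :
    pbwGen m d p * pbwGen m d q = (-1 : ℝ) ^ d • (pbwGen m d q * pbwGen m d p) := by
  simpa [pbwGen] using RingQuot.mkAlgHom_rel ℝ (PBWRel.comm (m := m) (d := d) p q h)

lemma pbwGen_mul_pbwGen_of_snd_lt {i a b : Fin m} (hia : i < a) (hib : i < b) (hab : a < b) :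
    pbwGen m d ⟨(i, a), hia⟩ * pbwGen m d ⟨(i, b), hib⟩
      = pbwGen m d ⟨(i, a), hia⟩ * pbwGen m d ⟨(a, b), hab⟩
        - pbwGen m d ⟨(i, b), hib⟩ * pbwGen m d ⟨(a, b), hab⟩ := by
  have := RingQuot.mkAlgHom_rel ℝ (PBWRel.threeTerm (m := m) (d := d) i a b hia hab)
  rw [map_sub, map_sub, map_mul, map_mul, map_mul, map_zero, sub_eq_zero] at this
  exact this.symm

def wordEval (m d : ℕ) : WordSpace m →ₗ[ℝ] PBWAlg m d :=
  linearCombination ℝ (pbwWordProd m d)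

lemma wordEval_consₗ (q : OrdIdx m) (f : WordSpace m) :
    wordEval m d (consₗ q f) = pbwGen m d q * wordEval m d f := by
  suffices wordEval m d ∘ₗ consₗ q = LinearMap.mulLeft ℝ (pbwGen m d q) ∘ₗ wordEval m d
    from LinearMap.congr_fun this f
  ext l
  simp [wordEval, pbwWordProd_cons]

lemma wordEval_genMulWord {l : List (OrdIdx m)} (hl : AdmissibleWord m l) (p : OrdIdx m) :
    wordEval m d (genMulWord ((-1) ^ d) p l) = pbwGen m d p * pbwWordProd m d l := by
  induction l generalizing p with
  | nil => simp [wordEval, genMulWord_nil, pbwWordProd_cons, pbwWordProd_nil]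
  | cons q t ih =>
    have ih := ih (admissibleWord_cons_iff.mp hl).2
    obtain ⟨⟨i, a⟩, hia⟩ := p
    obtain ⟨⟨k, b⟩, hkb⟩ := q
    rw [pbwWordProd_cons, ← mul_assoc]
    rcases lt_trichotomy i k with h | rfl | h
    · rw [genMulWord_cons_of_fst_lt h]
      simp [wordEval, pbwWordProd_cons, mul_assoc]
    · rcases lt_trichotomy a b with hab | rfl | hba
      · rw [genMulWord_cons_of_snd_lt hab, map_sub, wordEval_consₗ, wordEval_consₗ, ih,
          pbwGen_mul_pbwGen_of_snd_lt hia hkb hab, sub_mul, mul_assoc, mul_assoc]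
      · rw [genMulWord_cons_self, map_zero, pbwGen_mul_self, zero_mul]
      · rw [genMulWord_cons_of_snd_gt hba, map_smul, map_sub, wordEval_consₗ, wordEval_consₗ,
          ih, pbwGen_mul_comm (fun e => hba.ne' (congrArg (fun x => x.1.2) e)),
          pbwGen_mul_pbwGen_of_snd_lt hkb hia hba, smul_mul_assoc, sub_mul, mul_assoc, mul_assoc]
    · rw [genMulWord_cons_of_fst_gt h, map_smul, wordEval_consₗ, ih,
        pbwGen_mul_comm (fun e => h.ne' (congrArg (fun x => x.1.1) e)), smul_mul_assoc, mul_assoc]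

lemma wordEval_mem_span_admissible {f : WordSpace m}
    (hf : f ∈ supported ℝ ℝ {w | AdmissibleWord m w}) :
    wordEval m d f ∈ Submodule.span ℝ
      (Set.range fun w : {l // AdmissibleWord m l} => pbwWordProd m d w.1) := by
  have := (mem_span_image_iff_linearCombination ℝ (v := pbwWordProd m d)).mpr ⟨f, hf, rfl⟩
  rwa [Set.image_eq_range] at this

lemma span_pbwWordProd_admissible_eq_top :
    Submodule.span ℝ
      (Set.range fun w : {l // AdmissibleWord m l} => pbwWordProd m d w.1) = ⊤ := by
  set P := Submodule.span ℝ (Set.range fun w : {l // AdmissibleWord m l} => pbwWordProd m d w.1)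
  have hgen (p : OrdIdx m) (y : PBWAlg m d) (hy : y ∈ P) : pbwGen m d p * y ∈ P := by
    induction hy using Submodule.span_induction with
    | mem _ hx =>
      obtain ⟨⟨w, hw⟩, rfl⟩ := hx
      rw [← wordEval_genMulWord hw]
      exact wordEval_mem_span_admissible (genMulWord_mem_supported_admissibleWord hw p)
    | zero => simp
    | add _ _ _ _ hx hy => rw [mul_add]; exact add_mem hx hy
    | smul c _ _ hx => rw [mul_smul_comm]; exact Submodule.smul_mem _ c hx
  have hmul (x : PBWAlg m d) : ∀ y ∈ P, x * y ∈ P := by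
    obtain ⟨z, rfl⟩ := RingQuot.mkAlgHom_surjective ℝ (PBWRel m d) x
    induction z using FreeAlgebra.induction with
    | grade0 r =>
      intro y hy
      rw [AlgHom.commutes, ← Algebra.smul_def]
      exact Submodule.smul_mem _ _ hy
    | grade1 p => exact hgen p
    | mul a b ha hb => intro y hy; rw [map_mul, mul_assoc]; exact ha _ (hb y hy)
    | add a b ha hb => intro y hy; rw [map_add, add_mul]; exact add_mem (ha y hy) (hb y hy)
  refine eq_top_iff.mpr fun x _ => mul_one x ▸ hmul x 1 ?_
  exact Submodule.subset_span ⟨⟨[], List.Pairwise.nil⟩, pbwWordProd_nil⟩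

lemma lift_genOp_eq_of_pbwRel {x y : FreeAlgebra ℝ (OrdIdx m)} (h : PBWRel m d x y) :
    FreeAlgebra.lift ℝ (genOp ((-1) ^ d)) x = FreeAlgebra.lift ℝ (genOp ((-1) ^ d)) y := by
  have hε : ((-1 : ℝ) ^ d) * (-1) ^ d = 1 := by rw [← mul_pow]; norm_num
  cases h with
  | sq p =>
    ext t : 2
    simpa using (satisfiesRelations_single hε t).sq p
  | comm p q _ =>
    ext t : 2
    simpa using (satisfiesRelations_single hε t).comm p q
  | threeTerm i j k hij hjk =>
    ext t : 2
    simpa [sub_sub, sub_eq_zero] using (satisfiesRelations_single hε t).threeTerm i j k hij hjk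

def wordRep (m d : ℕ) : PBWAlg m d →ₐ[ℝ] Module.End ℝ (WordSpace m) :=
  RingQuot.liftAlgHom ℝ
    ⟨FreeAlgebra.lift ℝ (genOp ((-1) ^ d)), fun _ _ => lift_genOp_eq_of_pbwRel⟩

lemma wordRep_pbwGen (p : OrdIdx m) : wordRep m d (pbwGen m d p) = genOp ((-1) ^ d) p := by
  rw [pbwGen, wordRep, RingQuot.liftAlgHom_mkAlgHom_apply, FreeAlgebra.lift_ι_apply]

lemma wordRep_pbwWordProd_single_nil {l : List (OrdIdx m)} (hl : AdmissibleWord m l) :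
    wordRep m d (pbwWordProd m d l) (single [] 1) = single l 1 := by
  induction l with
  | nil => rw [pbwWordProd_nil, map_one, Module.End.one_apply]
  | cons p t ih =>
    rw [pbwWordProd_cons, map_mul, Module.End.mul_apply, ih (admissibleWord_cons_iff.mp hl).2,
      wordRep_pbwGen, genOp_single, one_smul, genMulWord_of_admissibleWord hl]

lemma linearIndependent_pbwWordProd_admissible :
    LinearIndependent ℝ fun w : {l // AdmissibleWord m l} => pbwWordProd m d w.1 := by
  refine .of_comp (LinearMap.applyₗ (single [] 1) ∘ₗ (wordRep m d).toLinearMap) ?_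
  have hcomp : (LinearMap.applyₗ (single [] 1) ∘ₗ (wordRep m d).toLinearMap) ∘
      (fun w : {l // AdmissibleWord m l} => pbwWordProd m d w.1) = fun w => single w.1 1 :=
    funext fun w => wordRep_pbwWordProd_single_nil w.2
  rw [hcomp]
  exact (linearIndependent_single_one ℝ _).comp Subtype.val Subtype.val_injective

end PBWAlg

theorem pbw_basis_general (m d : ℕ) :
    ∃ b : Module.Basis {l : List (OrdIdx m) // AdmissibleWord m l} ℝ (PBWAlg m d),
      ∀ w : {l : List (OrdIdx m) // AdmissibleWord m l}, b w = pbwWordProd m d w.1 :=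
  ⟨.mk PBWAlg.linearIndependent_pbwWordProd_admissible
    PBWAlg.span_pbwWordProd_admissible_eq_top.ge, Module.Basis.mk_apply _ _⟩

/-- The admissible monomials form a linear basis of the presented algebra. -/
theorem pbw_basis (m d : ℕ) (hd : 1 ≤ d) :
    ∃ b : Module.Basis {l : List (OrdIdx m) // AdmissibleWord m l} ℝ (PBWAlg m d),
      ∀ w : {l : List (OrdIdx m) // AdmissibleWord m l}, b w = pbwWordProd m d w.1 :=
  pbw_basis_general m d

end
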